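/- Let n ≥ 2 and let h ⊆ so(n) ⋉ g_- ⊂ so(1,n+1) be indecomposable of type 4: there is an orthogonal splitting V_0 = V_1 ⊕ V_2 with dim V_1 ≥ 1, dim V_2 ≥ 2, a subalgebra h_0 ⊆ so(V_2) ⊆ so(n) with center z and semisimple part s, and a surjective linear map ψ: z → V_1, such that h = (graph(ψ) ⊕ s) ⋉ V_2 (with V_2 ⊂ g_-). If S ∈ Hom(V, g) satisfies [X,S(v)] = S(Xv) for all X ∈ h, v ∈ V, then S(e_-) = 0 and S(x) ∈ g_- for all x ∈ V_0. -/

import Mathlib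

open scoped BigOperators

attribute [local instance] LieRing.ofAssociativeRing

/-- Minkowski space `ℝ^{1,n+1}` in a Witt basis, coordinates indexed by `Fin (n+2)`:
index `0` is `e₋`, indices `1,…,n` are the Euclidean directions, index `n+1` is `e₊`. -/
abbrev Vm (n : ℕ) : Type := Fin (n + 2) → ℝ

def lastIx (n : ℕ) : Fin (n + 2) := Fin.last (n + 1)

def midIx (n : ℕ) (i : Fin n) : Fin (n + 2) := ⟨i.1 + 1, by omega⟩

/-- The Minkowski inner product in the Witt basis. -/
noncomputable def wB (n : ℕ) (u v : Vm n) : ℝ :=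
  u 0 * v (lastIx n) + u (lastIx n) * v 0 + ∑ i : Fin n, u (midIx n i) * v (midIx n i)

noncomputable def eMinus (n : ℕ) : Vm n := Pi.single 0 1
noncomputable def ePlus (n : ℕ) : Vm n := Pi.single (lastIx n) 1
noncomputable def eMid (n : ℕ) (i : Fin n) : Vm n := Pi.single (midIx n i) 1

/-- The embedding `ℝⁿ ≃ V₀ ⊆ V`. -/
noncomputable def vmid (n : ℕ) (c : Fin n → ℝ) : Vm n := ∑ i : Fin n, c i • eMid n i

/-- Membership in `so(1,n+1)`: skew-symmetry with respect to the Minkowski product. -/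
def IsSkewB (n : ℕ) (A : Module.End ℝ (Vm n)) : Prop :=
  ∀ u v : Vm n, wB n (A u) v + wB n u (A v) = 0

/-- The element `v̄ ∈ 𝔤₋` associated with `v ∈ ℝⁿ`: `v̄ e₊ = v`, `v̄ eᵢ = -vᵢ e₋`, `v̄ e₋ = 0`. -/
noncomputable def barE (n : ℕ) (v : Fin n → ℝ) : Module.End ℝ (Vm n) :=
  (LinearMap.proj (lastIx n) : Vm n →ₗ[ℝ] ℝ).smulRight (vmid n v)
    - (∑ i : Fin n, v i • (LinearMap.proj (midIx n i) : Vm n →ₗ[ℝ] ℝ)).smulRight (eMinus n)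

/-- The `ℝ`-component of the projection of `X` to `𝔤₀ ≅ ℝ ⊕ so(n)`. -/
noncomputable def piR (n : ℕ) (X : Module.End ℝ (Vm n)) : ℝ :=
  wB n (X (eMinus n)) (ePlus n)

/-- The projection `π₋ : 𝔭 → 𝔤₋ ≅ ℝⁿ`. -/
noncomputable def piMinusE (n : ℕ) (X : Module.End ℝ (Vm n)) : Fin n → ℝ :=
  fun i => wB n (X (ePlus n)) (eMid n i)

/-- The action of the `𝔤₀ ≅ 𝔠𝔬(n)`-projection `π₀(X)` of `X` on `ℝⁿ`. -/
noncomputable def pi0Act (n : ℕ) (X : Module.End ℝ (Vm n)) (c : Fin n → ℝ) : Fin n → ℝ :=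
  fun j => piR n X * c j + ∑ i : Fin n, wB n (X (eMid n i)) (eMid n j) * c i

/-- Membership in the parabolic `𝔭 = stab(ℝ·e₋) ⊆ so(1,n+1)`. -/
def MemP (n : ℕ) (X : Module.End ℝ (Vm n)) : Prop :=
  IsSkewB n X ∧ X (eMinus n) ∈ Submodule.span ℝ {eMinus n}

/-- Indecomposability: no nondegenerate invariant subspace other than `⊥` and `⊤`. -/
def Indecomp (n : ℕ) (h : LieSubalgebra ℝ (Module.End ℝ (Vm n))) : Prop :=
  ∀ W : Submodule ℝ (Vm n),
    (∀ X ∈ h, ∀ w ∈ W, X w ∈ W) →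
    (∀ w ∈ W, (∀ w' ∈ W, wB n w w' = 0) → w = 0) →
    W = ⊥ ∨ W = ⊤

/-!
Write `A ∈ so(1,n+1)` as `α + ζ + ρ + T` with `α ∈ ℝ`, `ζ ∈ 𝔤₁`, `ρ ∈ 𝔤₋`, `T ∈ so(n)`
(`piR`, `piPlusE`, `piMinusE`, `soAct`) and read `[X, S u] = S (X u)` componentwise for
`X ∈ so(n) ⋉ 𝔤₋`.

If `u` has no `e₊`-component, pick `0 ≠ v ∈ V₂` orthogonal to its `V₀`-part (`dim V₂ ≥ 2`):
then `v̄ u = 0`, the `𝔤₋`-component gives `T(S u) v = -α(S u) v`, and skew-symmetry of `T`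
forces `α(S u) = 0`. As `X u` never has an `e₊`-component, the `ℝ`-component
`-⟨π₋ X, ζ(S u)⟩` of `[X, S u]` vanishes, and `π₋(𝔥) ⊇ V₁ + V₂` gives `ζ ∘ S = 0`.

For `X ∈ 𝔥` with `y = π₋ X` and `T(X) y = 0` (the `v̄`, and the graph elements over `V₁`),
the `𝔤₋`-component at `u = y` is `-|y|² ρ(S e₋) = T(X) ρ(S y) - T(S y) y`; pairing with `y`
and using skew-symmetry gives `ρ(S e₋) ⟂ y`, hence `ρ(S e₋) = 0`. The same equation at
`u = x ∈ V₁` then gives `T(S x) y = T(X) ρ(S x)`, which is orthogonal to `V₁` and to `V₂`.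
Finally the `so(n)`-component of `[v̄, S u]` only involves `ζ(S u) = 0`, which kills `T(S e₋)`
(at `u = v`) and `T(S v)` (at `u = e₊`).
-/

section Coordinates

variable {n : ℕ}

lemma lastIx_ne_zero : lastIx n ≠ 0 := by
  simp [lastIx, Fin.ext_iff]

lemma midIx_ne_zero (i : Fin n) : midIx n i ≠ 0 := by
  simp [midIx, Fin.ext_iff]

lemma midIx_ne_lastIx (i : Fin n) : midIx n i ≠ lastIx n := by
  simp [midIx, lastIx, Fin.ext_iff, i.2.ne]

lemma midIx_injective : Function.Injective (midIx n) := by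
  intro i j h
  simpa [midIx, Fin.ext_iff] using h

lemma eq_zero_or_eq_lastIx_or_eq_midIx (k : Fin (n + 2)) :
    k = 0 ∨ k = lastIx n ∨ ∃ i, k = midIx n i := by
  rcases Fin.eq_zero_or_eq_succ k with rfl | ⟨k, rfl⟩
  · exact Or.inl rfl
  rcases Fin.eq_castSucc_or_eq_last k with ⟨i, rfl⟩ | rfl
  · exact Or.inr (Or.inr ⟨i, rfl⟩)
  · exact Or.inr (Or.inl rfl)

lemma vm_ext {u w : Vm n} (h0 : u 0 = w 0) (hlast : u (lastIx n) = w (lastIx n))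
    (hmid : ∀ i, u (midIx n i) = w (midIx n i)) : u = w := by
  funext k
  rcases eq_zero_or_eq_lastIx_or_eq_midIx k with rfl | rfl | ⟨i, rfl⟩
  exacts [h0, hlast, hmid i]

@[simp] lemma eMinus_apply_zero : eMinus n 0 = 1 := by simp [eMinus]
@[simp] lemma eMinus_apply_lastIx : eMinus n (lastIx n) = 0 := by
  simp [eMinus, lastIx_ne_zero]
@[simp] lemma eMinus_apply_midIx (i : Fin n) : eMinus n (midIx n i) = 0 := by
  simp [eMinus, midIx_ne_zero]
@[simp] lemma ePlus_apply_zero : ePlus n 0 = 0 := by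
  simp [ePlus, lastIx_ne_zero.symm]
@[simp] lemma ePlus_apply_lastIx : ePlus n (lastIx n) = 1 := by simp [ePlus]
@[simp] lemma ePlus_apply_midIx (i : Fin n) : ePlus n (midIx n i) = 0 := by
  simp [ePlus, midIx_ne_lastIx]
@[simp] lemma vmid_apply_zero (c : Fin n → ℝ) : vmid n c 0 = 0 := by
  simp [vmid, eMid, Finset.sum_apply, (midIx_ne_zero _).symm]
@[simp] lemma vmid_apply_lastIx (c : Fin n → ℝ) : vmid n c (lastIx n) = 0 := by
  simp [vmid, eMid, Finset.sum_apply, (midIx_ne_lastIx _).symm]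
@[simp] lemma vmid_apply_midIx (c : Fin n → ℝ) (j : Fin n) : vmid n c (midIx n j) = c j := by
  simp [vmid, eMid, Finset.sum_apply, Pi.single_apply, midIx_injective.eq_iff]

@[simp] lemma vmid_zero : vmid n 0 = 0 :=
  vm_ext (by simp) (by simp) (by simp)

lemma vmid_add (c d : Fin n → ℝ) : vmid n (c + d) = vmid n c + vmid n d :=
  vm_ext (by simp) (by simp) (by simp)

lemma eq_smul_eMinus_add_vmid_add_smul_ePlus (u : Vm n) :
    u = u 0 • eMinus n + vmid n (fun i => u (midIx n i)) + u (lastIx n) • ePlus n :=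
  vm_ext (by simp) (by simp) (by simp)

@[simp] lemma wB_ePlus (u : Vm n) : wB n u (ePlus n) = u 0 := by simp [wB]
@[simp] lemma wB_eMinus (u : Vm n) : wB n u (eMinus n) = u (lastIx n) := by simp [wB]
@[simp] lemma wB_eMid (u : Vm n) (j : Fin n) : wB n u (eMid n j) = u (midIx n j) := by
  simp [wB, eMid, Pi.single_apply, midIx_injective.eq_iff, midIx_ne_zero, midIx_ne_lastIx]

lemma wB_vmid (u : Vm n) (c : Fin n → ℝ) :
    wB n u (vmid n c) = (fun i => u (midIx n i)) ⬝ᵥ c := by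
  simp [wB, dotProduct]

@[simp] lemma wB_zero_left (u : Vm n) : wB n 0 u = 0 := by simp [wB]

lemma wB_comm (u v : Vm n) : wB n u v = wB n v u := by
  simp only [wB, mul_comm]
  ring

end Coordinates

/-- The `𝔤₁`-component of an element of `so(1,n+1)`, read off from its value on `e₋`. -/
noncomputable def piPlusE (n : ℕ) (A : Module.End ℝ (Vm n)) : Fin n → ℝ :=
  fun i => A (eMinus n) (midIx n i)

/-- The `so(n)`-component of an element of `so(1,n+1)`, as an endomorphism of `ℝⁿ`. -/
noncomputable def soAct (n : ℕ) (A : Module.End ℝ (Vm n)) (c : Fin n → ℝ) : Fin n → ℝ :=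
  fun j => A (vmid n c) (midIx n j)

section Components

variable {n : ℕ}

lemma piR_eq_apply (A : Module.End ℝ (Vm n)) : piR n A = A (eMinus n) 0 := by
  simp [piR]

lemma piPlusE_eq (A : Module.End ℝ (Vm n)) :
    piPlusE n A = fun i => A (eMinus n) (midIx n i) := rfl

lemma piMinusE_eq (A : Module.End ℝ (Vm n)) :
    piMinusE n A = fun i => A (ePlus n) (midIx n i) := by
  funext i; simp [piMinusE]

lemma piMinusE_apply (A : Module.End ℝ (Vm n)) (i : Fin n) :
    piMinusE n A i = A (ePlus n) (midIx n i) := by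
  simp [piMinusE]

@[simp] lemma piMinusE_zero : piMinusE n 0 = 0 := by
  funext i; simp [piMinusE_apply]

lemma piMinusE_smul (t : ℝ) (A : Module.End ℝ (Vm n)) :
    piMinusE n (t • A) = t • piMinusE n A := by
  funext i; simp [piMinusE_apply]

lemma soAct_add_left (A B : Module.End ℝ (Vm n)) (c : Fin n → ℝ) :
    soAct n (A + B) c = soAct n A c + soAct n B c := rfl

lemma soAct_smul_left (t : ℝ) (A : Module.End ℝ (Vm n)) (c : Fin n → ℝ) :
    soAct n (t • A) c = t • soAct n A c := rfl

@[simp] lemma soAct_zero (A : Module.End ℝ (Vm n)) : soAct n A 0 = 0 := by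
  funext j; simp [soAct]

lemma soAct_add (A : Module.End ℝ (Vm n)) (c d : Fin n → ℝ) :
    soAct n A (c + d) = soAct n A c + soAct n A d := by
  funext j; simp [soAct, vmid_add]

namespace IsSkewB

variable {A : Module.End ℝ (Vm n)} (hA : IsSkewB n A)
include hA

lemma wB_apply_self (u : Vm n) : wB n (A u) u = 0 := by
  have := hA u u
  rw [wB_comm u] at this
  linarith

lemma wB_apply_left (u v : Vm n) : wB n (A u) v = -wB n (A v) u := by
  have := hA u v
  rw [wB_comm u] at this
  linarith

lemma apply_eMinus : A (eMinus n) = piR n A • eMinus n + vmid n (piPlusE n A) := by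
  refine vm_ext ?_ ?_ fun i => ?_
  · simp [piR_eq_apply]
  · simpa using hA.wB_apply_self (eMinus n)
  · simp [piPlusE]

lemma apply_ePlus : A (ePlus n) = vmid n (piMinusE n A) - piR n A • ePlus n := by
  refine vm_ext ?_ ?_ fun i => ?_
  · simpa using hA.wB_apply_self (ePlus n)
  · simpa [piR] using hA.wB_apply_left (ePlus n) (eMinus n)
  · simp [piMinusE_apply]

lemma apply_vmid (c : Fin n → ℝ) :
    A (vmid n c) = -(piMinusE n A ⬝ᵥ c) • eMinus n + vmid n (soAct n A c)
      - (piPlusE n A ⬝ᵥ c) • ePlus n := by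
  refine vm_ext ?_ ?_ fun i => ?_
  · have := hA.wB_apply_left (vmid n c) (ePlus n)
    simp only [wB_ePlus, wB_vmid] at this
    simp [this, piMinusE_eq]
  · have := hA.wB_apply_left (vmid n c) (eMinus n)
    simp only [wB_eMinus, wB_vmid] at this
    simp [this, piPlusE_eq]
  · simp [soAct]

lemma soAct_dotProduct (c d : Fin n → ℝ) : soAct n A c ⬝ᵥ d = -(c ⬝ᵥ soAct n A d) := by
  have := hA.wB_apply_left (vmid n c) (vmid n d)
  simp only [wB_vmid] at this
  rw [dotProduct_comm c]
  exact this

lemma soAct_dotProduct_self (c : Fin n → ℝ) : soAct n A c ⬝ᵥ c = 0 := by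
  have := hA.soAct_dotProduct c c
  rw [dotProduct_comm c] at this
  linarith

end IsSkewB

lemma IsSkewB.ext_components {A B : Module.End ℝ (Vm n)} (hA : IsSkewB n A) (hB : IsSkewB n B)
    (hR : piR n A = piR n B) (hP : piPlusE n A = piPlusE n B)
    (hM : piMinusE n A = piMinusE n B) (hT : soAct n A = soAct n B) : A = B := by
  refine LinearMap.ext fun u => ?_
  rw [eq_smul_eMinus_add_vmid_add_smul_ePlus u]
  simp only [map_add, map_smul, hA.apply_eMinus, hA.apply_ePlus, hA.apply_vmid,
    hB.apply_eMinus, hB.apply_ePlus, hB.apply_vmid, hR, hP, hM, hT]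

end Components

/-- Membership in `so(n) ⋉ 𝔤₋`, the annihilator of `e₋` in `so(1,n+1)`. -/
def MemSoGMinus (n : ℕ) (X : Module.End ℝ (Vm n)) : Prop :=
  IsSkewB n X ∧ X (eMinus n) = 0

lemma Module.End.lie_apply_eq_sub {R M : Type*} [CommRing R] [AddCommGroup M] [Module R M]
    (X A : Module.End R M) (u : M) : ⁅X, A⁆ u = X (A u) - A (X u) := by
  simp [Ring.lie_def]

section SoGMinus

variable {n : ℕ}

namespace MemSoGMinus

variable {X : Module.End ℝ (Vm n)} (hX : MemSoGMinus n X)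
include hX

lemma piR_eq_zero : piR n X = 0 := by
  simp [piR, hX.2]

lemma piPlusE_eq_zero : piPlusE n X = 0 := by
  funext i; simp [piPlusE, hX.2]

lemma apply_ePlus : X (ePlus n) = vmid n (piMinusE n X) := by
  simp [hX.1.apply_ePlus, hX.piR_eq_zero]

lemma apply_vmid (c : Fin n → ℝ) :
    X (vmid n c) = vmid n (soAct n X c) - (piMinusE n X ⬝ᵥ c) • eMinus n := by
  rw [hX.1.apply_vmid, hX.piPlusE_eq_zero, zero_dotProduct, zero_smul, sub_zero, neg_smul,
    neg_add_eq_sub]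

lemma apply_lastIx (u : Vm n) : X u (lastIx n) = 0 := by
  simpa [hX.2] using hX.1.wB_apply_left u (eMinus n)

variable {A : Module.End ℝ (Vm n)} (hA : IsSkewB n A)
include hA

lemma piR_lie : piR n ⁅X, A⁆ = -(piMinusE n X ⬝ᵥ piPlusE n A) := by
  rw [piR_eq_apply, Module.End.lie_apply_eq_sub, hX.2, map_zero, sub_zero, hA.apply_eMinus,
    map_add, map_smul, hX.2, smul_zero, zero_add, hX.apply_vmid]
  simp

lemma piMinusE_lie : piMinusE n ⁅X, A⁆ =
    soAct n X (piMinusE n A) - piR n A • piMinusE n X - soAct n A (piMinusE n X) := by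
  funext i
  rw [piMinusE_apply, Module.End.lie_apply_eq_sub, hA.apply_ePlus, hX.apply_ePlus, map_sub,
    map_smul, hX.apply_ePlus, hX.apply_vmid, hA.apply_vmid]
  simp

lemma soAct_lie (c : Fin n → ℝ) : soAct n ⁅X, A⁆ c =
    soAct n X (soAct n A c) - soAct n A (soAct n X c)
      + (piMinusE n X ⬝ᵥ c) • piPlusE n A - (piPlusE n A ⬝ᵥ c) • piMinusE n X := by
  funext i
  rw [soAct, Module.End.lie_apply_eq_sub, hA.apply_vmid, hX.apply_vmid]
  simp only [map_sub, map_add, map_smul]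
  rw [hX.2, hX.apply_vmid, hX.apply_ePlus, hA.apply_vmid, hA.apply_eMinus]
  simp
  ring

end MemSoGMinus

lemma barE_apply (v : Fin n → ℝ) (u : Vm n) :
    barE n v u = u (lastIx n) • vmid n v - (v ⬝ᵥ fun i => u (midIx n i)) • eMinus n := by
  simp [barE, dotProduct]

@[simp] lemma barE_eMinus (v : Fin n → ℝ) : barE n v (eMinus n) = 0 := by
  simp [barE_apply]

@[simp] lemma barE_ePlus (v : Fin n → ℝ) : barE n v (ePlus n) = vmid n v := by
  simp [barE_apply]

lemma barE_vmid (v c : Fin n → ℝ) : barE n v (vmid n c) = -(v ⬝ᵥ c) • eMinus n := by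
  simp [barE_apply, neg_smul]

lemma wB_barE_apply (v : Fin n → ℝ) (u w : Vm n) :
    wB n (barE n v u) w = u (lastIx n) * (v ⬝ᵥ fun i => w (midIx n i))
      - (v ⬝ᵥ fun i => u (midIx n i)) * w (lastIx n) := by
  simp [barE_apply, wB, dotProduct, Finset.mul_sum, mul_comm, mul_left_comm]
  ring

lemma isSkewB_barE (v : Fin n → ℝ) : IsSkewB n (barE n v) := by
  intro u w
  rw [wB_barE_apply, wB_comm u, wB_barE_apply]
  ring

lemma memSoGMinus_barE (v : Fin n → ℝ) : MemSoGMinus n (barE n v) :=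
  ⟨isSkewB_barE v, barE_eMinus v⟩

@[simp] lemma piR_barE (v : Fin n → ℝ) : piR n (barE n v) = 0 := (memSoGMinus_barE v).piR_eq_zero

@[simp] lemma piPlusE_barE (v : Fin n → ℝ) : piPlusE n (barE n v) = 0 :=
  (memSoGMinus_barE v).piPlusE_eq_zero

@[simp] lemma piMinusE_barE (v : Fin n → ℝ) : piMinusE n (barE n v) = v := by
  funext i; simp [piMinusE_apply]

@[simp] lemma soAct_barE (v c : Fin n → ℝ) : soAct n (barE n v) c = 0 := by
  funext j; simp [soAct, barE_vmid]

@[simp] lemma barE_zero : barE n 0 = 0 :=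
  LinearMap.ext fun u => by simp [barE_apply]

lemma IsSkewB.eq_barE_piMinusE {A : Module.End ℝ (Vm n)} (hA : IsSkewB n A) (hR : piR n A = 0)
    (hP : piPlusE n A = 0) (hT : soAct n A = 0) : A = barE n (piMinusE n A) :=
  hA.ext_components (isSkewB_barE _) (by simp [hR]) (by simp [hP]) (by simp) (by
    funext c; simp [hT])

lemma soAct_eq_pi0Act {X : Module.End ℝ (Vm n)} (hX : piR n X = 0) (c : Fin n → ℝ) :
    soAct n X c = pi0Act n X c := by
  funext j
  simp [soAct, pi0Act, hX, vmid, map_sum, Finset.sum_apply, mul_comm]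

end SoGMinus

section DotProduct

variable {ι K : Type*} [Fintype ι]

lemma eq_zero_of_forall_dotProduct_eq_zero_of_sup_eq_top [Field K] [LinearOrder K]
    [IsStrictOrderedRing K] {U V : Submodule K (ι → K)} (hUV : U ⊔ V = ⊤) {c : ι → K}
    (hU : ∀ x ∈ U, x ⬝ᵥ c = 0) (hV : ∀ x ∈ V, x ⬝ᵥ c = 0) : c = 0 := by
  obtain ⟨x, hx, v, hv, rfl⟩ := Submodule.mem_sup.mp (hUV ▸ Submodule.mem_top : c ∈ U ⊔ V)
  rw [← dotProduct_self_eq_zero, add_dotProduct, hU x hx, hV v hv, add_zero]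

lemma Submodule.exists_mem_ne_zero_dotProduct_eq_zero [Field K] {U : Submodule K (ι → K)}
    (hU : 2 ≤ Module.finrank K U) (c : ι → K) : ∃ w ∈ U, w ≠ 0 ∧ c ⬝ᵥ w = 0 := by
  let f : U →ₗ[K] K := (dotProductBilin K K c).comp U.subtype
  have hker : LinearMap.ker f ≠ ⊥ := fun hker => by
    have := LinearMap.finrank_le_finrank_of_injective (LinearMap.ker_eq_bot.mp hker)
    rw [Module.finrank_self] at this
    omega
  obtain ⟨w, hw, hw0⟩ := Submodule.exists_mem_ne_zero_of_ne_bot hker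
  exact ⟨w, w.2, by simpa using hw0, hw⟩

end DotProduct

section Equivariance

variable {n : ℕ}

def IsEquivariantAt (S : Vm n →ₗ[ℝ] Module.End ℝ (Vm n)) (X : Module.End ℝ (Vm n)) : Prop :=
  ∀ u, ⁅X, S u⁆ = S (X u)

variable {S : Vm n →ₗ[ℝ] Module.End ℝ (Vm n)} (hS : ∀ u, IsSkewB n (S u))
include hS

lemma soAct_eq_neg_piR_smul_of_barE_apply_eq_zero {v : Fin n → ℝ}
    (hv : IsEquivariantAt S (barE n v)) {u : Vm n} (hu : barE n v u = 0) :
    soAct n (S u) v = -piR n (S u) • v := by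
  have h := (memSoGMinus_barE v).piMinusE_lie (hS u)
  rw [hv u, hu, map_zero] at h
  simp only [piMinusE_zero, soAct_barE, piMinusE_barE, zero_sub] at h
  rw [eq_comm, sub_eq_zero] at h
  rw [← h, neg_smul]

lemma piR_eq_zero_of_barE_apply_eq_zero {v : Fin n → ℝ} (hv0 : v ≠ 0)
    (hv : IsEquivariantAt S (barE n v)) {u : Vm n} (hu : barE n v u = 0) :
    piR n (S u) = 0 := by
  have h := (hS u).soAct_dotProduct_self v
  rw [soAct_eq_neg_piR_smul_of_barE_apply_eq_zero hS hv hu, smul_dotProduct, smul_eq_mul,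
    neg_mul, neg_eq_zero] at h
  exact (mul_eq_zero.mp h).resolve_right (dotProduct_self_eq_zero.not.mpr hv0)

lemma piR_eq_zero_of_apply_lastIx_eq_zero {U : Submodule ℝ (Fin n → ℝ)}
    (hU : 2 ≤ Module.finrank ℝ U) (hbar : ∀ v ∈ U, IsEquivariantAt S (barE n v)) {u : Vm n}
    (hu : u (lastIx n) = 0) : piR n (S u) = 0 := by
  obtain ⟨w, hwU, hw0, hwu⟩ :=
    Submodule.exists_mem_ne_zero_dotProduct_eq_zero hU fun i => u (midIx n i)
  refine piR_eq_zero_of_barE_apply_eq_zero hS hw0 (hbar w hwU) ?_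
  rw [barE_apply, hu, dotProduct_comm, hwu, zero_smul, zero_smul, sub_zero]

lemma dotProduct_piMinusE_eMinus_eq_zero {X : Module.End ℝ (Vm n)} (hX : MemSoGMinus n X)
    (hXS : IsEquivariantAt S X) (hXX : soAct n X (piMinusE n X) = 0)
    (hα : piR n (S (vmid n (piMinusE n X))) = 0) :
    piMinusE n (S (eMinus n)) ⬝ᵥ piMinusE n X = 0 := by
  have h := hX.piMinusE_lie (hS (vmid n (piMinusE n X)))
  rw [hXS, hX.apply_vmid, hXX, vmid_zero, zero_sub, ← neg_smul, map_smul, piMinusE_smul, hα,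
    zero_smul, sub_zero] at h
  have h' := congrArg (· ⬝ᵥ piMinusE n X) h
  simp only [smul_dotProduct, sub_dotProduct, hX.1.soAct_dotProduct, hXX, dotProduct_zero,
    (hS _).soAct_dotProduct_self, neg_zero, sub_zero, smul_eq_mul, neg_mul, neg_eq_zero] at h'
  rcases mul_eq_zero.mp h' with hy | hρ
  · rw [dotProduct_self_eq_zero.mp hy, dotProduct_zero]
  · exact hρ

lemma soAct_barE_apply_eq_zero {v : Fin n → ℝ} (hv : IsEquivariantAt S (barE n v)) {u : Vm n}
    (hu : piPlusE n (S u) = 0) : soAct n (S (barE n v u)) = 0 := by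
  funext c
  rw [← hv u, (memSoGMinus_barE v).soAct_lie (hS u), hu]
  simp

lemma soAct_vmid_piMinusE_eq {X : Module.End ℝ (Vm n)} (hX : MemSoGMinus n X)
    (hXS : IsEquivariantAt S X) (hρ : piMinusE n (S (eMinus n)) = 0) {x : Fin n → ℝ}
    (hx : soAct n X x = 0) (hα : piR n (S (vmid n x)) = 0) :
    soAct n (S (vmid n x)) (piMinusE n X) = soAct n X (piMinusE n (S (vmid n x))) := by
  have h := hX.piMinusE_lie (hS (vmid n x))
  rw [hXS, hX.apply_vmid, hx, vmid_zero, zero_sub, ← neg_smul, map_smul, piMinusE_smul, hρ,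
    smul_zero, hα, zero_smul, sub_zero, eq_comm, sub_eq_zero] at h
  exact h.symm

end Equivariance

/-- `H` plays the role of `𝔥` and `U1`, `U2` of `V₁`, `V₂`; `exists_graph` encodes that
`ψ : 𝔷 → V₁` is onto and that `𝔥₀` acts trivially on `V₁`. -/
structure IsType4Setting (n : ℕ) (S : Vm n →ₗ[ℝ] Module.End ℝ (Vm n))
    (U1 U2 : Submodule ℝ (Fin n → ℝ)) (H : Set (Module.End ℝ (Vm n))) : Prop where
  isSkewB : ∀ u, IsSkewB n (S u)
  sup_eq_top : U1 ⊔ U2 = ⊤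
  dotProduct_eq_zero : ∀ x ∈ U1, ∀ v ∈ U2, x ⬝ᵥ v = 0
  two_le_finrank : 2 ≤ Module.finrank ℝ U2
  mem : ∀ X ∈ H, MemSoGMinus n X ∧ IsEquivariantAt S X
  barE_mem : ∀ v ∈ U2, barE n v ∈ H
  exists_graph : ∀ y ∈ U1, ∃ X ∈ H, piMinusE n X = y ∧ ∀ x ∈ U1, soAct n X x = 0

namespace IsType4Setting

variable {n : ℕ} {S : Vm n →ₗ[ℝ] Module.End ℝ (Vm n)} {U1 U2 : Submodule ℝ (Fin n → ℝ)}
  {H : Set (Module.End ℝ (Vm n))} (hT : IsType4Setting n S U1 U2 H)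
include hT

lemma isEquivariantAt_barE {v : Fin n → ℝ} (hv : v ∈ U2) : IsEquivariantAt S (barE n v) :=
  (hT.mem _ (hT.barE_mem v hv)).2

lemma piR_eq_zero {u : Vm n} (hu : u (lastIx n) = 0) : piR n (S u) = 0 :=
  piR_eq_zero_of_apply_lastIx_eq_zero hT.isSkewB hT.two_le_finrank
    (fun _ => hT.isEquivariantAt_barE) hu

lemma eq_zero_of_forall_dotProduct_piMinusE_eq_zero {c : Fin n → ℝ}
    (hc : ∀ X ∈ H, soAct n X (piMinusE n X) = 0 → piMinusE n X ⬝ᵥ c = 0) : c = 0 := by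
  refine eq_zero_of_forall_dotProduct_eq_zero_of_sup_eq_top hT.sup_eq_top (fun y hy => ?_)
    fun v hv => by simpa using hc _ (hT.barE_mem v hv) (by simp)
  obtain ⟨X, hX, rfl, hXU1⟩ := hT.exists_graph y hy
  exact hc X hX (hXU1 _ hy)

lemma piPlusE_eq_zero (u : Vm n) : piPlusE n (S u) = 0 := by
  refine hT.eq_zero_of_forall_dotProduct_piMinusE_eq_zero fun X hX _ => ?_
  have h := (hT.mem X hX).1.piR_lie (hT.isSkewB u)
  rwa [(hT.mem X hX).2 u, hT.piR_eq_zero ((hT.mem X hX).1.apply_lastIx u), eq_comm,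
    neg_eq_zero] at h

lemma piMinusE_eMinus_eq_zero : piMinusE n (S (eMinus n)) = 0 := by
  refine hT.eq_zero_of_forall_dotProduct_piMinusE_eq_zero fun X hX hXX => ?_
  rw [dotProduct_comm]
  exact dotProduct_piMinusE_eMinus_eq_zero hT.isSkewB (hT.mem X hX).1 (hT.mem X hX).2 hXX
    (hT.piR_eq_zero (by simp))

lemma soAct_eMinus_eq_zero : soAct n (S (eMinus n)) = 0 := by
  obtain ⟨v, hv, hv0, -⟩ := Submodule.exists_mem_ne_zero_dotProduct_eq_zero hT.two_le_finrank 0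
  have h := soAct_barE_apply_eq_zero hT.isSkewB (hT.isEquivariantAt_barE hv)
    (hT.piPlusE_eq_zero (vmid n v))
  funext c
  have hc := congrFun h c
  rw [barE_vmid, map_smul, soAct_smul_left, Pi.zero_apply, smul_eq_zero, neg_eq_zero,
    dotProduct_self_eq_zero] at hc
  exact hc.resolve_left hv0

lemma soAct_vmid_eq_zero_of_mem_right {v : Fin n → ℝ} (hv : v ∈ U2) :
    soAct n (S (vmid n v)) = 0 := by
  simpa using soAct_barE_apply_eq_zero hT.isSkewB (hT.isEquivariantAt_barE hv)
    (hT.piPlusE_eq_zero (ePlus n))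

lemma soAct_vmid_eq_zero_of_mem_left {x : Fin n → ℝ} (hx : x ∈ U1) :
    soAct n (S (vmid n x)) = 0 := by
  have hα : piR n (S (vmid n x)) = 0 := hT.piR_eq_zero (by simp)
  have hU2 : ∀ v ∈ U2, soAct n (S (vmid n x)) v = 0 := fun v hv => by
    rw [soAct_eq_neg_piR_smul_of_barE_apply_eq_zero hT.isSkewB (hT.isEquivariantAt_barE hv)
      (by rw [barE_vmid, dotProduct_comm, hT.dotProduct_eq_zero x hx v hv, neg_zero, zero_smul]),
      hα, neg_zero, zero_smul]
  have hU1 : ∀ y ∈ U1, soAct n (S (vmid n x)) y = 0 := fun y hy => by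
    obtain ⟨X, hX, rfl, hXU1⟩ := hT.exists_graph y hy
    refine eq_zero_of_forall_dotProduct_eq_zero_of_sup_eq_top hT.sup_eq_top (fun x' hx' => ?_)
      fun v hv => ?_
    · rw [soAct_vmid_piMinusE_eq hT.isSkewB (hT.mem X hX).1 (hT.mem X hX).2
        hT.piMinusE_eMinus_eq_zero (hXU1 x hx) hα, dotProduct_comm,
        (hT.mem X hX).1.1.soAct_dotProduct, hXU1 x' hx', dotProduct_zero, neg_zero]
    · rw [dotProduct_comm, (hT.isSkewB _).soAct_dotProduct, hU2 v hv, dotProduct_zero, neg_zero]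
  funext d
  obtain ⟨y, hy, v, hv, rfl⟩ :=
    Submodule.mem_sup.mp (hT.sup_eq_top ▸ Submodule.mem_top : d ∈ U1 ⊔ U2)
  rw [soAct_add, hU1 y hy, hU2 v hv, add_zero, Pi.zero_apply]

lemma soAct_vmid_eq_zero (c : Fin n → ℝ) : soAct n (S (vmid n c)) = 0 := by
  obtain ⟨x, hx, v, hv, rfl⟩ :=
    Submodule.mem_sup.mp (hT.sup_eq_top ▸ Submodule.mem_top : c ∈ U1 ⊔ U2)
  funext d
  rw [vmid_add, map_add, soAct_add_left, hT.soAct_vmid_eq_zero_of_mem_left hx,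
    hT.soAct_vmid_eq_zero_of_mem_right hv, Pi.zero_apply, add_zero]

lemma apply_eMinus_eq_zero : S (eMinus n) = 0 := by
  rw [(hT.isSkewB _).eq_barE_piMinusE (hT.piR_eq_zero (by simp)) (hT.piPlusE_eq_zero _)
    hT.soAct_eMinus_eq_zero, hT.piMinusE_eMinus_eq_zero, barE_zero]

lemma apply_vmid_eq_barE (c : Fin n → ℝ) : S (vmid n c) = barE n (piMinusE n (S (vmid n c))) :=
  (hT.isSkewB _).eq_barE_piMinusE (hT.piR_eq_zero (by simp)) (hT.piPlusE_eq_zero _)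
    (hT.soAct_vmid_eq_zero c)

end IsType4Setting

theorem stmt19_general (n : ℕ) (h : LieSubalgebra ℝ (Module.End ℝ (Vm n)))
    (U1 U2 : Submodule ℝ (Fin n → ℝ))
    (hcompl : IsCompl U1 U2)
    (horth : ∀ x ∈ U1, ∀ y ∈ U2, ∑ i : Fin n, x i * y i = 0)
    (hd2 : 2 ≤ Module.finrank ℝ U2)
    (hsub : ∀ X ∈ h, IsSkewB n X ∧ X (eMinus n) = 0)
    (hbar : ∀ v : Fin n → ℝ, barE n v ∈ h ↔ v ∈ U2)
    (htriv : ∀ X ∈ h, ∀ x ∈ U1, pi0Act n X x = 0)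
    (hgraph : ∀ y ∈ U1, ∃ X ∈ h, piMinusE n X = y ∧
      ∀ X' ∈ h, ∀ c : Fin n → ℝ, pi0Act n X (pi0Act n X' c) = pi0Act n X' (pi0Act n X c))
    (S : Vm n →ₗ[ℝ] Module.End ℝ (Vm n))
    (hSskew : ∀ v : Vm n, IsSkewB n (S v))
    (hSeq : ∀ X ∈ h, ∀ v : Vm n, ⁅X, S v⁆ = S (X v)) :
    S (eMinus n) = 0 ∧ ∀ c : Fin n → ℝ, ∃ w : Fin n → ℝ, S (vmid n c) = barE n w := by
  have hT : IsType4Setting n S U1 U2 h :=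
    { isSkewB := hSskew
      sup_eq_top := hcompl.sup_eq_top
      dotProduct_eq_zero := horth
      two_le_finrank := hd2
      mem := fun X hX => ⟨hsub X hX, hSeq X hX⟩
      barE_mem := fun v hv => (hbar v).2 hv
      exists_graph := fun y hy => by
        obtain ⟨X, hX, rfl, -⟩ := hgraph y hy
        exact ⟨X, hX, rfl, fun x hx =>
          (soAct_eq_pi0Act (MemSoGMinus.piR_eq_zero (hsub X hX)) x).trans (htriv X hX x hx)⟩ }
  exact ⟨hT.apply_eMinus_eq_zero, fun c => ⟨_, hT.apply_vmid_eq_barE c⟩⟩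

/-- Let `n ≥ 2` and let `𝔥 ⊆ so(n) ⋉ 𝔤₋ ⊂ so(1,n+1)` be indecomposable of
type 4: there is an orthogonal splitting `V₀ = V₁ ⊕ V₂` with `dim V₁ ≥ 1`, `dim V₂ ≥ 2`,
`𝔥 ∩ 𝔤₋ = V₂`, the `so(n)`-part `𝔥₀` of `𝔥` acts trivially on `V₁`, and for every `y ∈ V₁`
there is a graph element `X ∈ 𝔥` with `π₋(X) = y` whose `𝔥₀`-part is central (surjectivity
of `ψ : 𝔷 → V₁`).  If `S ∈ Hom(V,𝔤)` satisfies `[X,S(v)] = S(Xv)` for all `X ∈ 𝔥`, `v ∈ V`,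
then `S(e₋) = 0` and `S(x) ∈ 𝔤₋` for all `x ∈ V₀`. -/
theorem stmt19 (n : ℕ) (hn : 2 ≤ n) (h : LieSubalgebra ℝ (Module.End ℝ (Vm n)))
    (U1 U2 : Submodule ℝ (Fin n → ℝ))
    (hcompl : IsCompl U1 U2)
    (horth : ∀ x ∈ U1, ∀ y ∈ U2, ∑ i : Fin n, x i * y i = 0)
    (hd1 : 1 ≤ Module.finrank ℝ U1)
    (hd2 : 2 ≤ Module.finrank ℝ U2)
    (hsub : ∀ X ∈ h, IsSkewB n X ∧ X (eMinus n) = 0)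
    (hind : Indecomp n h)
    (hbar : ∀ v : Fin n → ℝ, barE n v ∈ h ↔ v ∈ U2)
    (htriv : ∀ X ∈ h, ∀ x ∈ U1, pi0Act n X x = 0)
    (hgraph : ∀ y ∈ U1, ∃ X ∈ h, piMinusE n X = y ∧
      ∀ X' ∈ h, ∀ c : Fin n → ℝ, pi0Act n X (pi0Act n X' c) = pi0Act n X' (pi0Act n X c))
    (S : Vm n →ₗ[ℝ] Module.End ℝ (Vm n))
    (hSskew : ∀ v : Vm n, IsSkewB n (S v))
    (hSeq : ∀ X ∈ h, ∀ v : Vm n, ⁅X, S v⁆ = S (X v)) :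
    S (eMinus n) = 0 ∧ ∀ c : Fin n → ℝ, ∃ w : Fin n → ℝ, S (vmid n c) = barE n w :=
  stmt19_general n h U1 U2 hcompl horth hd2 hsub hbar htriv hgraph S hSskew hSeq
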